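/- Let n ≥ 3 be an integer and let v : ℝ → ℝ be a bounded, twice continuously differentiable function with v(t) ≥ 0 for all t ∈ ℝ satisfying the Delaunay ODE v''(t) − ((n−2)²/4)·v(t) + (n·(n−2)/4)·v(t)^((n+2)/(n−2)) = 0 for all t ∈ ℝ, and assume H(v(t), v'(t)) = 0 for all t ∈ ℝ. Then either v is identically 0, or there exists t₀ ∈ ℝ such that v(t) = (cosh(t − t₀))^((2−n)/2) for all t ∈ ℝ. -/

import Mathlib

/-- The Delaunay ODE: `v'' − ((n−2)²/4)·v + (n·(n−2)/4)·v^((n+2)/(n−2)) = 0`. -/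
def DelaunayODE (n : ℕ) (v : ℝ → ℝ) : Prop :=
  ∀ t : ℝ, deriv (deriv v) t - (((n : ℝ) - 2) ^ 2 / 4) * v t
    + ((n : ℝ) * ((n : ℝ) - 2) / 4) * v t ^ (((n : ℝ) + 2) / ((n : ℝ) - 2)) = 0

/-- The Hamiltonian energy of the Delaunay ODE:
`H(v, w) = w² − ((n−2)²/4)·v² + ((n−2)²/4)·v^(2n/(n−2))`. -/
noncomputable def delaunayH (n : ℕ) (v w : ℝ) : ℝ :=
  w ^ 2 - (((n : ℝ) - 2) ^ 2 / 4) * v ^ 2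
    + (((n : ℝ) - 2) ^ 2 / 4) * v ^ (2 * (n : ℝ) / ((n : ℝ) - 2))

/-!
Where `v > 0`, the substitution `u = v ^ (2 / (2 - n))` turns the Delaunay equation with zero
energy into `u'' = u` together with `u' ^ 2 = u ^ 2 - 1`, whose positive solutions on an interval
are exactly the functions `cosh (t - t₀)`. So on the connected component of `{v > 0}` through a
point where `v` is positive, `v = cosh (t - t₀) ^ ((2 - n) / 2)`. This formula stays bounded away
from `0` up to the boundary of the component, so by continuity the component is closed, hence all
of `ℝ`.
-/

open Real Set

lemma exists_eq_mul_exp_add_mul_exp {s : Set ℝ} (hs : IsOpen s) (hs' : IsPreconnected s)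
    {u u' : ℝ → ℝ} (hu : ∀ t ∈ s, HasDerivAt u (u' t) t)
    (hu' : ∀ t ∈ s, HasDerivAt u' (u t) t) :
    ∃ a b : ℝ, ∀ t ∈ s, u t = a * exp t + b * exp (-t) ∧ u' t = a * exp t - b * exp (-t) := by
  have hA : ∀ t ∈ s, HasDerivAt (fun t ↦ (u t + u' t) * exp (-t)) 0 t := fun t ht ↦
    (((hu t ht).add (hu' t ht)).mul (hasDerivAt_neg t).exp).congr_deriv
      (by simp only [Pi.add_apply]; ring)
  have hB : ∀ t ∈ s, HasDerivAt (fun t ↦ (u t - u' t) * exp t) 0 t := fun t ht ↦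
    (((hu t ht).sub (hu' t ht)).mul (hasDerivAt_exp t)).congr_deriv
      (by simp only [Pi.sub_apply]; ring)
  obtain ⟨A, hA⟩ := hs.exists_is_const_of_deriv_eq_zero hs'
    (fun t ht ↦ (hA t ht).differentiableAt.differentiableWithinAt) (fun t ht ↦ (hA t ht).deriv)
  obtain ⟨B, hB⟩ := hs.exists_is_const_of_deriv_eq_zero hs'
    (fun t ht ↦ (hB t ht).differentiableAt.differentiableWithinAt) (fun t ht ↦ (hB t ht).deriv)
  refine ⟨A / 2, B / 2, fun t ht ↦ ?_⟩
  have he : exp t * exp (-t) = 1 := by rw [← exp_add, add_neg_cancel, exp_zero]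
  constructor
  · linear_combination (exp t * hA t ht + exp (-t) * hB t ht) / 2 - u t * he
  · linear_combination (exp t * hA t ht - exp (-t) * hB t ht) / 2 - u' t * he

lemma exists_eq_cosh_sub_of_hasDerivAt {s : Set ℝ} (hs : IsOpen s) (hs' : IsPreconnected s)
    {u u' : ℝ → ℝ} (hu : ∀ t ∈ s, HasDerivAt u (u' t) t)
    (hu' : ∀ t ∈ s, HasDerivAt u' (u t) t) (hE : ∀ t ∈ s, u' t ^ 2 = u t ^ 2 - 1)
    (hpos : ∀ t ∈ s, 0 < u t) :
    ∃ t₀, ∀ t ∈ s, u t = cosh (t - t₀) := by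
  rcases s.eq_empty_or_nonempty with rfl | ⟨t₁, ht₁⟩
  · exact ⟨0, fun t ht ↦ ht.elim⟩
  obtain ⟨a, b, hab⟩ := exists_eq_mul_exp_add_mul_exp hs hs' hu hu'
  obtain ⟨hu₁, hu'₁⟩ := hab t₁ ht₁
  have he : exp t₁ * exp (-t₁) = 1 := by rw [← exp_add, add_neg_cancel, exp_zero]
  have hab4 : 4 * (a * b) = 1 := by
    have h := hE t₁ ht₁
    rw [hu₁, hu'₁] at h
    linear_combination -h - 4 * a * b * he
  have hb : 0 < b := by
    have h := hpos t₁ ht₁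
    rw [hu₁] at h
    by_contra! hb
    have ha : a < 0 := by nlinarith
    nlinarith [exp_pos t₁, mul_nonpos_of_nonneg_of_nonpos (exp_pos (-t₁)).le hb]
  refine ⟨log (2 * b), fun t ht ↦ ?_⟩
  rw [(hab t ht).1, cosh_eq, neg_sub, exp_sub, exp_sub, exp_neg, exp_log (by positivity)]
  field_simp
  linear_combination exp t ^ 2 * hab4

noncomputable def delaunayExp (n : ℕ) : ℝ := 2 / (2 - n)

section
variable {n : ℕ} {x w : ℝ}

lemma delaunayExp_mul (hn : n ≠ 2) : delaunayExp n * (2 - n) = 2 :=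
  div_mul_cancel₀ _ (sub_ne_zero.mpr (by exact_mod_cast hn.symm))

lemma rpow_add_div_eq_div_rpow_delaunayExp_sq (hn : n ≠ 2) (hx : 0 < x) (k : ℝ) :
    x ^ (k + 4 / ((n : ℝ) - 2)) = x ^ k / (x ^ delaunayExp n) ^ 2 := by
  have h : (n : ℝ) - 2 ≠ 0 := sub_ne_zero.mpr (by exact_mod_cast hn)
  rw [show k + 4 / ((n : ℝ) - 2) = k - delaunayExp n * 2 by
      field_simp; linear_combination -2 * delaunayExp_mul hn,
    rpow_sub hx, rpow_mul hx.le, rpow_two]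

lemma delaunayH_eq_of_pos (hn : n ≠ 2) (hx : 0 < x) :
    delaunayH n x w = w ^ 2 - ((n - 2) ^ 2 / 4) * x ^ 2 * (1 - 1 / (x ^ delaunayExp n) ^ 2) := by
  have h : (n : ℝ) - 2 ≠ 0 := sub_ne_zero.mpr (by exact_mod_cast hn)
  rw [delaunayH, show 2 * (n : ℝ) / (n - 2) = 2 + 4 / (n - 2) by field_simp; ring,
    rpow_add_div_eq_div_rpow_delaunayExp_sq hn hx, rpow_two]
  ring

lemma sq_deriv_rpow_delaunayExp_of_delaunayH_eq_zero (hn : n ≠ 2) (hx : 0 < x)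
    (h : delaunayH n x w = 0) :
    (delaunayExp n * x ^ (delaunayExp n - 1) * w) ^ 2 = (x ^ delaunayExp n) ^ 2 - 1 := by
  have h' : (2 : ℝ) - n ≠ 0 := sub_ne_zero.mpr (by exact_mod_cast hn.symm)
  rw [delaunayH_eq_of_pos hn hx] at h
  rw [rpow_sub_one hx.ne']
  have hu : 0 < x ^ delaunayExp n := rpow_pos_of_pos hx _
  generalize x ^ delaunayExp n = u at *
  have hw : w ^ 2 = ((n - 2) ^ 2 / 4) * x ^ 2 * (1 - 1 / u ^ 2) := by linear_combination h
  rw [mul_pow, hw, delaunayExp]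
  field_simp
  ring

variable {v : ℝ → ℝ}

lemma hasDerivAt_delaunayExp_mul_rpow_mul_deriv (hn : n ≠ 2) {t : ℝ}
    (hv : HasDerivAt v (deriv v t) t) (hv' : HasDerivAt (deriv v) (deriv (deriv v) t) t)
    (hpos : 0 < v t) (hode : DelaunayODE n v) (hH : delaunayH n (v t) (deriv v t) = 0) :
    HasDerivAt (fun s ↦ delaunayExp n * v s ^ (delaunayExp n - 1) * deriv v s)
      (v t ^ delaunayExp n) t := by
  have hpow := (hasDerivAt_rpow_const (p := delaunayExp n - 1) (Or.inl hpos.ne')).comp t hv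
  refine ((hpow.const_mul (delaunayExp n)).mul hv').congr_deriv ?_
  have h : (n : ℝ) - 2 ≠ 0 := sub_ne_zero.mpr (by exact_mod_cast hn)
  have h' : (2 : ℝ) - n ≠ 0 := sub_ne_zero.mpr (by exact_mod_cast hn.symm)
  have hode := hode t
  rw [show ((n : ℝ) + 2) / (n - 2) = 1 + 4 / (n - 2) by field_simp; ring,
    rpow_add_div_eq_div_rpow_delaunayExp_sq hn hpos, rpow_one] at hode
  rw [delaunayH_eq_of_pos hn hpos] at hH
  rw [Function.comp_apply, rpow_sub_one hpos.ne', rpow_sub_one hpos.ne']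
  have hu : 0 < v t ^ delaunayExp n := rpow_pos_of_pos hpos _
  generalize v t ^ delaunayExp n = u at *
  generalize v t = x at *
  have hv'' : deriv (deriv v) t = ((n - 2) ^ 2 / 4) * x - (n * (n - 2) / 4) * (x / u ^ 2) := by
    linear_combination hode
  have hw : deriv v t ^ 2 = ((n - 2) ^ 2 / 4) * x ^ 2 * (1 - 1 / u ^ 2) := by
    linear_combination hH
  rw [show ∀ p : ℝ, p * ((p - 1) * (u / x / x) * deriv v t) * deriv v t
      + p * (u / x) * deriv (deriv v) t
      = p * (p - 1) * (u / x / x) * deriv v t ^ 2 + p * (u / x) * deriv (deriv v) t from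
      fun p ↦ by ring, hv'', hw, delaunayExp]
  field_simp
  ring

lemma exists_eq_cosh_rpow_of_pos_on {s : Set ℝ} (hs : IsOpen s) (hs' : IsPreconnected s)
    (hn : n ≠ 2) (hC2 : ContDiff ℝ 2 v) (hode : DelaunayODE n v)
    (hH : ∀ t, delaunayH n (v t) (deriv v t) = 0) (hpos : ∀ t ∈ s, 0 < v t) :
    ∃ t₀, ∀ t ∈ s, v t = cosh (t - t₀) ^ ((2 - n : ℝ) / 2) := by
  have hv : Differentiable ℝ v := hC2.differentiable (by norm_num)
  have hv' : Differentiable ℝ (deriv v) := hC2.differentiable_deriv_two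
  obtain ⟨t₀, ht₀⟩ := exists_eq_cosh_sub_of_hasDerivAt hs hs'
    (u := fun t ↦ v t ^ delaunayExp n)
    (fun t ht ↦ (hasDerivAt_rpow_const (Or.inl (hpos t ht).ne')).comp t (hv t).hasDerivAt)
    (fun t ht ↦ hasDerivAt_delaunayExp_mul_rpow_mul_deriv hn (hv t).hasDerivAt
      (hv' t).hasDerivAt (hpos t ht) hode (hH t))
    (fun t ht ↦ sq_deriv_rpow_delaunayExp_of_delaunayH_eq_zero hn (hpos t ht) (hH t))
    (fun t ht ↦ rpow_pos_of_pos (hpos t ht) _)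
  refine ⟨t₀, fun t ht ↦ ?_⟩
  have hp : delaunayExp n * ((2 - n) / 2) = 1 := by linear_combination delaunayExp_mul hn / 2
  rw [← ht₀ t ht, ← rpow_mul (hpos t ht).le, hp, rpow_one]

lemma exists_eq_cosh_rpow_of_pos (hn : n ≠ 2) (hC2 : ContDiff ℝ 2 v) (hode : DelaunayODE n v)
    (hH : ∀ t, delaunayH n (v t) (deriv v t) = 0) {s : ℝ} (hs : 0 < v s) :
    ∃ t₀, ∀ t, v t = cosh (t - t₀) ^ ((2 - n : ℝ) / 2) := by
  have hv : Continuous v := hC2.continuous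
  have hF : IsOpen {t | 0 < v t} := isOpen_lt continuous_const hv
  set I := connectedComponentIn {t | 0 < v t} s
  obtain ⟨t₀, ht₀⟩ := exists_eq_cosh_rpow_of_pos_on hF.connectedComponentIn
    isPreconnected_connectedComponentIn hn hC2 hode hH
    (fun t ht ↦ connectedComponentIn_subset {t | 0 < v t} s ht)
  have hcl : EqOn v (fun t ↦ cosh (t - t₀) ^ ((2 - n : ℝ) / 2)) (closure I) :=
    EqOn.closure ht₀ hv ((continuous_cosh.comp (continuous_sub_right t₀)).rpow_const
      fun t ↦ Or.inl (cosh_pos _).ne')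
  have hsI : s ∈ I := mem_connectedComponentIn hs
  have hIclosed : closure I ⊆ I :=
    isPreconnected_connectedComponentIn.closure.subset_connectedComponentIn
      (subset_closure hsI) fun t ht ↦ by
        show 0 < v t
        rw [hcl ht]
        exact rpow_pos_of_pos (cosh_pos _) _
  have hI : I = univ :=
    IsClopen.eq_univ ⟨closure_subset_iff_isClosed.mp hIclosed, hF.connectedComponentIn⟩ ⟨s, hsI⟩
  exact ⟨t₀, fun t ↦ ht₀ t (hI.symm ▸ mem_univ t : t ∈ I)⟩

end

theorem stmt_7_general (n : ℕ) (hn : 3 ≤ n) (v : ℝ → ℝ)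
    (hC2 : ContDiff ℝ 2 v)
    (hnn : ∀ t : ℝ, 0 ≤ v t) (hode : DelaunayODE n v)
    (hH : ∀ t : ℝ, delaunayH n (v t) (deriv v t) = 0) :
    (∀ t : ℝ, v t = 0) ∨
      ∃ t₀ : ℝ, ∀ t : ℝ, v t = Real.cosh (t - t₀) ^ ((2 - (n : ℝ)) / 2) := by
  by_cases hzero : ∀ t, v t = 0
  · exact Or.inl hzero
  obtain ⟨s, hs⟩ := not_forall.mp hzero
  exact Or.inr (exists_eq_cosh_rpow_of_pos (by omega) hC2 hode hH ((hnn s).lt_of_ne' hs))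

theorem stmt_7 (n : ℕ) (hn : 3 ≤ n) (v : ℝ → ℝ)
    (hbdd : ∃ C : ℝ, ∀ t : ℝ, |v t| ≤ C) (hC2 : ContDiff ℝ 2 v)
    (hnn : ∀ t : ℝ, 0 ≤ v t) (hode : DelaunayODE n v)
    (hH : ∀ t : ℝ, delaunayH n (v t) (deriv v t) = 0) :
    (∀ t : ℝ, v t = 0) ∨
      ∃ t₀ : ℝ, ∀ t : ℝ, v t = Real.cosh (t - t₀) ^ ((2 - (n : ℝ)) / 2) :=
  stmt_7_general n hn v hC2 hnn hode hH
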